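/- arXiv:math-ph/0610004 — 2 statements merged into one kernel-verified Lean document; each statement's English description precedes it below -/
import Mathlib

section
/- Let w : ℝ → ℝ³ be differentiable with w(t) ≠ 0, write a := w′ and define 𝛘_a(t) := (ŵ(t)×a(t))/|w(t)| where ŵ := w/|w|. Then the unit vector ŵ is differentiable and satisfies dŵ/dt = 𝛘_a × ŵ. -/
/-! Differentiating `ŵ = w/|w|` gives `ŵ′ = (a − (ŵ·a) ŵ)/|w|`, the part of `a/|w|` orthogonal to
`ŵ`. Since `ŵ·ŵ = 1`, the vector triple product expansion `(ŵ×a)×ŵ = a − (ŵ·a) ŵ` identifies this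
with `𝛘_a × ŵ`. -/

open Matrix

/-- Euclidean magnitude of a vector in ℝ³. -/
noncomputable def mag (v : Fin 3 → ℝ) : ℝ := Real.sqrt (v ⬝ᵥ v)

/-- The unit tangent vector `ŵ := w/|w|` of a curve `w : ℝ → ℝ³`. -/
noncomputable def uhat (w : ℝ → Fin 3 → ℝ) (t : ℝ) : Fin 3 → ℝ := (mag (w t))⁻¹ • w t

/-- The growth rate `α_a := (ŵ·a)/|w|`, where `a := w′`. -/
noncomputable def alphaA (w : ℝ → Fin 3 → ℝ) (t : ℝ) : ℝ :=
  (uhat w t ⬝ᵥ deriv w t) / mag (w t)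

/-- The swing rate `𝛘_a := (ŵ×a)/|w|`, where `a := w′`. -/
noncomputable def chiA (w : ℝ → Fin 3 → ℝ) (t : ℝ) : Fin 3 → ℝ :=
  (mag (w t))⁻¹ • (uhat w t ⨯₃ deriv w t)

/-- `α_b := (ŵ·b)/|w|`, where `b := w″`. -/
noncomputable def alphaB (w : ℝ → Fin 3 → ℝ) (t : ℝ) : ℝ :=
  (uhat w t ⬝ᵥ deriv (deriv w) t) / mag (w t)

/-- `𝛘_b := (ŵ×b)/|w|`, where `b := w″`. -/
noncomputable def chiB (w : ℝ → Fin 3 → ℝ) (t : ℝ) : Fin 3 → ℝ :=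
  (mag (w t))⁻¹ • (uhat w t ⨯₃ deriv (deriv w) t)

/-- The unit vector `𝛘̂_a := 𝛘_a/|𝛘_a|`. -/
noncomputable def chiAhat (w : ℝ → Fin 3 → ℝ) (t : ℝ) : Fin 3 → ℝ :=
  (mag (chiA w t))⁻¹ • chiA w t

/-- The scalar `c_b := ŵ·(𝛘̂_a×𝛘_b)`. -/
noncomputable def cB (w : ℝ → Fin 3 → ℝ) (t : ℝ) : ℝ :=
  uhat w t ⬝ᵥ (chiAhat w t ⨯₃ chiB w t)

/-- The scalar `d_b := −(𝛘̂_a·𝛘_b)`. -/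
noncomputable def dB (w : ℝ → Fin 3 → ℝ) (t : ℝ) : ℝ :=
  -(chiAhat w t ⬝ᵥ chiB w t)

/-- The Darboux angular velocity vector `𝒟 := 𝛘_a + (c_b/|𝛘_a|) ŵ`. -/
noncomputable def darboux (w : ℝ → Fin 3 → ℝ) (t : ℝ) : Fin 3 → ℝ :=
  chiA w t + (cB w t / mag (chiA w t)) • uhat w t

theorem HasDerivAt.dotProduct {𝕜 ι : Type*} [NontriviallyNormedField 𝕜] [Fintype ι]
    {f g : 𝕜 → ι → 𝕜} {f' g' : ι → 𝕜} {x : 𝕜} (hf : HasDerivAt f f' x) (hg : HasDerivAt g g' x) :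
    HasDerivAt (fun y => f y ⬝ᵥ g y) (f' ⬝ᵥ g x + f x ⬝ᵥ g') x := by
  have := HasDerivAt.fun_sum (u := Finset.univ) fun i _ =>
    (hasDerivAt_pi.1 hf i).mul (hasDerivAt_pi.1 hg i)
  simpa only [_root_.dotProduct, Pi.mul_apply, ← Finset.sum_add_distrib] using this

section LinearOrderedRing

variable {ι R : Type*} [Fintype ι] [Ring R] [LinearOrder R] [IsStrictOrderedRing R]

theorem dotProduct_self_nonneg (v : ι → R) : 0 ≤ v ⬝ᵥ v :=
  Finset.sum_nonneg fun i _ => mul_self_nonneg (v i)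

theorem dotProduct_self_pos {v : ι → R} (hv : v ≠ 0) : 0 < v ⬝ᵥ v :=
  (dotProduct_self_nonneg v).lt_of_ne' (dotProduct_self_eq_zero.not.2 hv)

end LinearOrderedRing

theorem mag_pos {v : Fin 3 → ℝ} (hv : v ≠ 0) : 0 < mag v :=
  Real.sqrt_pos.2 (dotProduct_self_pos hv)

theorem sq_mag (v : Fin 3 → ℝ) : mag v ^ 2 = v ⬝ᵥ v :=
  Real.sq_sqrt (dotProduct_self_nonneg v)

theorem HasDerivAt.mag {w : ℝ → Fin 3 → ℝ} {a : Fin 3 → ℝ} {t : ℝ} (hw : HasDerivAt w a t)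
    (h0 : w t ≠ 0) : HasDerivAt (fun s => mag (w s)) ((w t ⬝ᵥ a) / mag (w t)) t := by
  refine ((hw.dotProduct hw).sqrt (dotProduct_self_pos h0).ne').congr_deriv ?_
  rw [dotProduct_comm a, ← two_mul, _root_.mag, mul_div_mul_left _ _ two_ne_zero]

theorem uhat_dotProduct_self {w : ℝ → Fin 3 → ℝ} {t : ℝ} (h0 : w t ≠ 0) :
    uhat w t ⬝ᵥ uhat w t = 1 := by
  have hm := (mag_pos h0).ne'
  rw [uhat, smul_dotProduct, dotProduct_smul, ← sq_mag, smul_eq_mul, smul_eq_mul]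
  field_simp

theorem hasDerivAt_uhat {w : ℝ → Fin 3 → ℝ} {a : Fin 3 → ℝ} {t : ℝ} (hw : HasDerivAt w a t)
    (h0 : w t ≠ 0) :
    HasDerivAt (uhat w) ((mag (w t))⁻¹ • (a - (uhat w t ⬝ᵥ a) • uhat w t)) t := by
  have hm := (mag_pos h0).ne'
  refine (((hw.mag h0).inv hm).smul hw).congr_deriv ?_
  rw [uhat, smul_dotProduct, smul_eq_mul, Pi.inv_apply]
  match_scalars <;> field_simp

theorem cross_cross_self_of_dotProduct_self_eq_one {R : Type*} [CommRing R] {u : Fin 3 → R}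
    (hu : u ⬝ᵥ u = 1) (a : Fin 3 → R) : u ⨯₃ a ⨯₃ u = a - (u ⬝ᵥ a) • u := by
  rw [cross_cross_eq_smul_sub_smul, hu, one_smul, dotProduct_comm]

/-- For a differentiable nonvanishing curve `w : ℝ → ℝ³` with `a := w′` and
`𝛘_a := (ŵ×a)/|w|`, the unit tangent vector satisfies `dŵ/dt = 𝛘_a × ŵ`. -/
theorem deriv_uhat (w : ℝ → Fin 3 → ℝ)
    (hd : Differentiable ℝ w) (hw : ∀ t, w t ≠ 0) (t : ℝ) :
    HasDerivAt (uhat w) (chiA w t ⨯₃ uhat w t) t := by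
  rw [chiA, map_smul, LinearMap.smul_apply,
    cross_cross_self_of_dotProduct_self_eq_one (uhat_dotProduct_self (hw t))]
  exact hasDerivAt_uhat (hd t).hasDerivAt (hw t)
end

section
/- (Ertel's theorem) Let u : ℝ³ × ℝ → ℝ³ and w : ℝ³ × ℝ → ℝ³ be continuously differentiable vector fields, and let μ : ℝ³ × ℝ → ℝ be twice continuously differentiable. Suppose w satisfies the Lagrangian evolution equation ∂w/∂t + (u·∇)w = (w·∇)u everywhere. Then the nonlinear terms cancel so that the material derivative D/Dt = ∂/∂t + u·∇ commutes with the operator w·∇ applied to μ: D(w·∇μ)/Dt = w·∇(Dμ/Dt), i.e. ∂(w·∇μ)/∂t + (u·∇)(w·∇μ) = (w·∇)(∂μ/∂t + (u·∇)μ). -/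
open Matrix

/-- Time partial derivative `∂f/∂t` of a scalar field `f : ℝ³ × ℝ → ℝ`. -/
noncomputable def pt (f : (Fin 3 → ℝ) × ℝ → ℝ) (z : (Fin 3 → ℝ) × ℝ) : ℝ :=
  fderiv ℝ f z (0, 1)

/-- Spatial partial derivative `∂f/∂xⱼ` of a scalar field `f : ℝ³ × ℝ → ℝ`. -/
noncomputable def pd (f : (Fin 3 → ℝ) × ℝ → ℝ) (j : Fin 3) (z : (Fin 3 → ℝ) × ℝ) : ℝ :=
  fderiv ℝ f z (Pi.single j 1, 0)

/-!
Differentiating `w·∇μ = Σₖ wₖ ∂ₖμ` along `D/Dt` gives `Σₖ (Dwₖ/Dt) ∂ₖμ + Σₖ wₖ D(∂ₖμ)/Dt`.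
By the evolution equation the first sum is `Σₖ (w·∇uₖ) ∂ₖμ`, and by the symmetry of second
derivatives `D(∂ₖμ)/Dt = ∂ₖ(Dμ/Dt) − Σⱼ ∂ₖuⱼ ∂ⱼμ`; the two double sums cancel, leaving
`Σₖ wₖ ∂ₖ(Dμ/Dt)`.
-/

open Finset

variable {E : Type*} [NormedAddCommGroup E] [NormedSpace ℝ E]

theorem fderiv_fderiv_apply_comm {f : E → ℝ} (hf : ContDiff ℝ 2 f) (z v v' : E) :
    fderiv ℝ (fun y => fderiv ℝ f y v) z v' = fderiv ℝ (fun y => fderiv ℝ f y v') z v := by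
  have hf' : DifferentiableAt ℝ (fderiv ℝ f) z :=
    (hf.fderiv_right (m := 1) le_rfl).differentiable one_ne_zero z
  simp only [fderiv_clm_apply hf' (differentiableAt_const _), fderiv_fun_const, Pi.zero_apply,
    ContinuousLinearMap.comp_zero, zero_add, ContinuousLinearMap.flip_apply]
  exact hf.contDiffAt.isSymmSndFDerivAt (by simp) v' v

theorem differentiable_fderiv_apply {f : E → ℝ} (hf : ContDiff ℝ 2 f) (v : E) :
    Differentiable ℝ (fun y => fderiv ℝ f y v) :=
  ((hf.fderiv_right (m := 1) le_rfl).clm_apply contDiff_const).differentiable one_ne_zero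

variable {ι : Type*} [Fintype ι]

theorem fderiv_sum_mul_apply {f g : ι → E → ℝ} {z : E}
    (hf : ∀ k, DifferentiableAt ℝ (f k) z) (hg : ∀ k, DifferentiableAt ℝ (g k) z) (v : E) :
    fderiv ℝ (fun y => ∑ k, f k y * g k y) z v
      = ∑ k, (fderiv ℝ (f k) z v * g k z + f k z * fderiv ℝ (g k) z v) := by
  rw [fderiv_fun_sum (A := fun k y => f k y * g k y) fun k _ => (hf k).mul (hg k),
    _root_.sum_apply]
  refine sum_congr rfl fun k _ => ?_
  rw [fderiv_fun_mul (hf k) (hg k)]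
  simp only [_root_.add_apply, _root_.smul_apply, smul_eq_mul]
  ring

section MaterialDerivative

variable (τ : E) (e : ι → E)

/-- `w·∇f`, with `e` the coordinate directions and `w` given by its coordinates. -/
noncomputable def fieldDeriv (w : E → ι → ℝ) (f : E → ℝ) (z : E) : ℝ :=
  ∑ j, w z j * fderiv ℝ f z (e j)

/-- `Df/Dt = ∂f/∂t + u·∇f`, with `τ` the time direction. -/
noncomputable def materialDeriv (u : E → ι → ℝ) (f : E → ℝ) (z : E) : ℝ :=
  fderiv ℝ f z τ + fieldDeriv e u f z

variable {τ e}

theorem materialDeriv_sum_mul {u : E → ι → ℝ} {f g : ι → E → ℝ} {z : E}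
    (hf : ∀ k, DifferentiableAt ℝ (f k) z) (hg : ∀ k, DifferentiableAt ℝ (g k) z) :
    materialDeriv τ e u (fun y => ∑ k, f k y * g k y) z
      = ∑ k, (materialDeriv τ e u (f k) z * g k z + f k z * materialDeriv τ e u (g k) z) := by
  simp only [materialDeriv, fieldDeriv, fderiv_sum_mul_apply hf hg, mul_sum]
  rw [sum_comm, ← sum_add_distrib]
  refine sum_congr rfl fun k _ => ?_
  simp only [mul_add, add_mul, sum_add_distrib, sum_mul, mul_sum, mul_assoc, mul_left_comm]
  ring

theorem materialDeriv_fderiv_apply {u : E → ι → ℝ} {μ : E → ℝ} {z : E}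
    (hu : ∀ k, DifferentiableAt ℝ (fun y => u y k) z) (hμ : ContDiff ℝ 2 μ) (v : E) :
    materialDeriv τ e u (fun y => fderiv ℝ μ y v) z
      = fderiv ℝ (materialDeriv τ e u μ) z v
        - ∑ j, fderiv ℝ (fun y => u y j) z v * fderiv ℝ μ z (e j) := by
  have hμ' := differentiable_fderiv_apply hμ
  have hsum : DifferentiableAt ℝ (fun y => ∑ j, u y j * fderiv ℝ μ y (e j)) z :=
    DifferentiableAt.fun_sum fun j _ => (hu j).mul (hμ' (e j) z)
  have hDμ : materialDeriv τ e u μ = fun y => fderiv ℝ μ y τ + ∑ j, u y j * fderiv ℝ μ y (e j) :=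
    rfl
  rw [hDμ, fderiv_fun_add (hμ' τ z) hsum, _root_.add_apply,
    fderiv_sum_mul_apply hu fun j => hμ' (e j) z]
  simp only [materialDeriv, fieldDeriv, fderiv_fderiv_apply_comm hμ _ v, sum_add_distrib]
  ring

theorem materialDeriv_fieldDeriv_comm {u w : E → ι → ℝ} {μ : E → ℝ} {z : E}
    (hu : ∀ k, DifferentiableAt ℝ (fun y => u y k) z)
    (hw : ∀ k, DifferentiableAt ℝ (fun y => w y k) z) (hμ : ContDiff ℝ 2 μ)
    (hevol : ∀ i, materialDeriv τ e u (fun y => w y i) z = fieldDeriv e w (fun y => u y i) z) :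
    materialDeriv τ e u (fieldDeriv e w μ) z = fieldDeriv e w (materialDeriv τ e u μ) z := by
  have hμ' := differentiable_fderiv_apply hμ
  calc materialDeriv τ e u (fieldDeriv e w μ) z
      = ∑ k, (materialDeriv τ e u (fun y => w y k) z * fderiv ℝ μ z (e k)
          + w z k * materialDeriv τ e u (fun y => fderiv ℝ μ y (e k)) z) :=
        materialDeriv_sum_mul hw fun k => hμ' (e k) z
    _ = ∑ k, (fieldDeriv e w (fun y => u y k) z * fderiv ℝ μ z (e k)
          + w z k * (fderiv ℝ (materialDeriv τ e u μ) z (e k)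
            - ∑ j, fderiv ℝ (fun y => u y j) z (e k) * fderiv ℝ μ z (e j))) := by
        simp only [hevol, materialDeriv_fderiv_apply hu hμ]
    _ = fieldDeriv e w (materialDeriv τ e u μ) z := by
        simp only [fieldDeriv, mul_sub, sum_add_distrib, sum_sub_distrib, sum_mul, mul_sum,
          mul_assoc]
        rw [sum_comm]
        ring

end MaterialDerivative

/-- Ertel's theorem: if the `C¹` vector field `w` satisfies
`∂w/∂t + (u·∇)w = (w·∇)u` along the `C¹` velocity field `u`, then for any `C²` scalar
`μ`, the material derivative `D/Dt = ∂/∂t + u·∇` commutes with `w·∇`: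
`D(w·∇μ)/Dt = w·∇(Dμ/Dt)`. -/
theorem ertel_theorem (u w : (Fin 3 → ℝ) × ℝ → Fin 3 → ℝ)
    (μ : (Fin 3 → ℝ) × ℝ → ℝ)
    (hu : ContDiff ℝ 1 u) (hw : ContDiff ℝ 1 w) (hμ : ContDiff ℝ 2 μ)
    (hevol : ∀ z i, pt (fun y => w y i) z + ∑ j, u z j * pd (fun y => w y i) j z
        = ∑ j, w z j * pd (fun y => u y i) j z)
    (z : (Fin 3 → ℝ) × ℝ) :
    pt (fun y => ∑ k, w y k * pd μ k y) z
        + ∑ j, u z j * pd (fun y => ∑ k, w y k * pd μ k y) j z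
      = ∑ j, w z j * pd (fun y => pt μ y + ∑ k, u y k * pd μ k y) j z :=
  materialDeriv_fieldDeriv_comm (τ := (0, 1)) (e := fun j => (Pi.single j 1, 0))
    (fun k => (contDiff_pi.1 hu k).differentiable one_ne_zero z)
    (fun k => (contDiff_pi.1 hw k).differentiable one_ne_zero z) hμ (hevol z)
end
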